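/- arXiv:2009.05561 — 2 statements merged into one kernel-verified Lean document; each statement's English description precedes it below -/
import Mathlib

section
/- For an almost contact metric manifold M with structure (φ, ξ, η, g), the following three conditions are equivalent: (1) M is η-normal; (2) M is a CR-manifold; (3) setting u(Y,X) = dη(φY, X) + g(hY, X), the Levi-Civita covariant derivative of φ satisfies g((∇_X φ)Y, Z) = (3/2)·dΦ(X, φY, φZ) − (3/2)·dΦ(X, Y, Z) + u(Y,X)·η(Z) − u(Z,X)·η(Y) for all vector fields X, Y, Z. -/
noncomputable section

/-!
An abstract model of smooth geometry: `F` plays the role of the algebra of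
smooth real-valued functions on a manifold `M`, `V` plays the role of the
`C^∞(M)`-module of smooth vector fields on `M` (with its Lie bracket), and
`D X f` represents the directional derivative of the function `f` along the
vector field `X`.
-/
structure SmoothSetting (F V : Type*) [CommRing F] [Algebra ℝ F]
    [LieRing V] [Module F V] [Module ℝ V] [IsScalarTower ℝ F V] where
  D : V → F → F
  D_add : ∀ (X : V) (f g : F), D X (f + g) = D X f + D X g
  D_mul : ∀ (X : V) (f g : F), D X (f * g) = f * D X g + g * D X f
  D_addX : ∀ (X Y : V) (f : F), D (X + Y) f = D X f + D Y f
  D_smulX : ∀ (f : F) (X : V) (k : F), D (f • X) k = f * D X k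
  D_bracket : ∀ (X Y : V) (f : F), D ⁅X, Y⁆ f = D X (D Y f) - D Y (D X f)
  bracket_smul : ∀ (f : F) (X Y : V), ⁅X, f • Y⁆ = f • ⁅X, Y⁆ + D X f • Y

/-- An almost contact metric manifold, modelled abstractly: a quadruple
`(φ, ξ, η, g)` where `φ` is a `(1,1)`-tensor field, `ξ` a vector field, `η` a
one-form and `g` a Riemannian metric, satisfying `φ² = -Id + η ⊗ ξ`,
`η(ξ) = 1` and `g(φX, φY) = g(X,Y) - η(X)η(Y)`, together with the Levi-Civita
connection `nabla` of `g` (characterised by metricity and torsion-freeness). -/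
structure ACMS (F V : Type*) [CommRing F] [PartialOrder F] [Algebra ℝ F]
    [LieRing V] [Module F V] [Module ℝ V] [IsScalarTower ℝ F V]
    extends SmoothSetting F V where
  phi : V → V
  xi : V
  eta : V → F
  g : V → V → F
  phi_add : ∀ X Y : V, phi (X + Y) = phi X + phi Y
  phi_smul : ∀ (f : F) (X : V), phi (f • X) = f • phi X
  eta_add : ∀ X Y : V, eta (X + Y) = eta X + eta Y
  eta_smul : ∀ (f : F) (X : V), eta (f • X) = f * eta X
  g_addX : ∀ X Y Z : V, g (X + Y) Z = g X Z + g Y Z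
  g_smulX : ∀ (f : F) (X Y : V), g (f • X) Y = f * g X Y
  g_symm : ∀ X Y : V, g X Y = g Y X
  g_nondeg : ∀ X : V, (∀ Y : V, g X Y = 0) → X = 0
  g_pos : ∀ X : V, 0 ≤ g X X
  phi_phi : ∀ X : V, phi (phi X) = -X + eta X • xi
  eta_xi : eta xi = 1
  phi_xi : phi xi = 0
  eta_phi : ∀ X : V, eta (phi X) = 0
  g_phi_phi : ∀ X Y : V, g (phi X) (phi Y) = g X Y - eta X * eta Y
  nabla : V → V → V
  nabla_addX : ∀ X Y Z : V, nabla (X + Y) Z = nabla X Z + nabla Y Z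
  nabla_smulX : ∀ (f : F) (X Y : V), nabla (f • X) Y = f • nabla X Y
  nabla_addY : ∀ X Y Z : V, nabla X (Y + Z) = nabla X Y + nabla X Z
  nabla_leibniz : ∀ (X : V) (f : F) (Y : V),
    nabla X (f • Y) = D X f • Y + f • nabla X Y
  nabla_torsion_free : ∀ X Y : V, nabla X Y - nabla Y X = ⁅X, Y⁆
  nabla_metric : ∀ X Y Z : V,
    D X (g Y Z) = g (nabla X Y) Z + g Y (nabla X Z)

namespace ACMS

variable {F V : Type*} [CommRing F] [PartialOrder F] [Algebra ℝ F]
  [LieRing V] [Module F V] [Module ℝ V] [IsScalarTower ℝ F V]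
variable (A : ACMS F V)

/-- The fundamental form `Φ(X,Y) = g(X, φY)`. -/
def Phi (X Y : V) : F := A.g X (A.phi Y)

/-- The exterior derivative `dη`, via the coboundary formula
`2 dη(X,Y) = X η(Y) - Y η(X) - η([X,Y])`. -/
def dEta (X Y : V) : F :=
  ((1:ℝ)/2) • (A.D X (A.eta Y) - A.D Y (A.eta X) - A.eta ⁅X, Y⁆)

/-- The exterior derivative `dΦ`, via the coboundary formula. -/
def dPhi (X Y Z : V) : F :=
  ((1:ℝ)/3) • (A.D X (A.Phi Y Z) + A.D Y (A.Phi Z X) + A.D Z (A.Phi X Y)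
    - A.Phi ⁅X, Y⁆ Z - A.Phi ⁅Y, Z⁆ X - A.Phi ⁅Z, X⁆ Y)

/-- The Lie derivative `(L_ξ η)(X)`. -/
def lieEta (X : V) : F := A.D A.xi (A.eta X) - A.eta ⁅A.xi, X⁆

/-- The Lie derivative `(L_ξ g)(X,Y)`. -/
def lieG (X Y : V) : F :=
  A.D A.xi (A.g X Y) - A.g ⁅A.xi, X⁆ Y - A.g X ⁅A.xi, Y⁆

/-- The Lie derivative `(L_ξ Φ)(X,Y)`. -/
def liePhiForm (X Y : V) : F :=
  A.D A.xi (A.Phi X Y) - A.Phi ⁅A.xi, X⁆ Y - A.Phi X ⁅A.xi, Y⁆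

/-- The Lie derivative `(L_ξ φ)(X)`. -/
def liePhi (X : V) : V := ⁅A.xi, A.phi X⁆ - A.phi ⁅A.xi, X⁆

/-- The tensor field `h = (1/2) L_ξ φ`. -/
def h (X : V) : V := ((1:ℝ)/2) • A.liePhi X

/-- The Nijenhuis torsion `[φ,φ](X,Y)`. -/
def nijPhi (X Y : V) : V :=
  A.phi (A.phi ⁅X, Y⁆) + ⁅A.phi X, A.phi Y⁆
    - A.phi ⁅A.phi X, Y⁆ - A.phi ⁅X, A.phi Y⁆

/-- The tensor `N⁽¹⁾(X,Y) = [φ,φ](X,Y) + 2 dη(X,Y) ξ`. -/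
def N1 (X Y : V) : V := A.nijPhi X Y + (2 * A.dEta X Y) • A.xi

/-- The tensor `N⁽²⁾(X,Y) = (L_{φX} η)(Y) - (L_{φY} η)(X)`. -/
def N2 (X Y : V) : F :=
  (A.D (A.phi X) (A.eta Y) - A.eta ⁅A.phi X, Y⁆)
    - (A.D (A.phi Y) (A.eta X) - A.eta ⁅A.phi Y, X⁆)

/-- The covariant derivative `(∇_X φ)(Y)`. -/
def covPhi (X Y : V) : V := A.nabla X (A.phi Y) - A.phi (A.nabla X Y)

/-- The covariant derivative `(∇_X η)(Y)`. -/
def covEta (X Y : V) : F := A.D X (A.eta Y) - A.eta (A.nabla X Y)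

/-- `M` is `η`-normal: `N⁽¹⁾(X,Y) = 0` whenever `η(X) = η(Y) = 0`. -/
def EtaNormal : Prop := ∀ X Y : V, A.eta X = 0 → A.eta Y = 0 → A.N1 X Y = 0

/-- `M` is normal: `N⁽¹⁾ = 0` identically. -/
def Normal : Prop := ∀ X Y : V, A.N1 X Y = 0

/-- `M` is a CR-manifold: for all `X, Y` with `η(X) = η(Y) = 0` there is `Z`
with `η(Z) = 0` and `[X - iφX, Y - iφY] = Z - iφZ` (stated here via its real
and imaginary parts). -/
def IsCR : Prop := ∀ X Y : V, A.eta X = 0 → A.eta Y = 0 →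
  ∃ Z : V, A.eta Z = 0 ∧ ⁅X, Y⁆ - ⁅A.phi X, A.phi Y⁆ = Z ∧
    ⁅A.phi X, Y⁆ + ⁅X, A.phi Y⁆ = A.phi Z

/-- `Dc` is a linear connection on `M`. -/
def IsConnection (Dc : V → V → V) : Prop :=
  (∀ X Y Z : V, Dc (X + Y) Z = Dc X Z + Dc Y Z) ∧
  (∀ (f : F) (X Y : V), Dc (f • X) Y = f • Dc X Y) ∧
  (∀ X Y Z : V, Dc X (Y + Z) = Dc X Y + Dc X Z) ∧
  (∀ (X : V) (f : F) (Y : V), Dc X (f • Y) = A.D X f • Y + f • Dc X Y)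

/-- `Dc` is a parallelization: a linear connection making the whole almost
contact metric structure parallel, `∇̃φ = 0`, `∇̃ξ = 0`, `∇̃η = 0`, `∇̃g = 0`. -/
def IsParallelization (Dc : V → V → V) : Prop :=
  A.IsConnection Dc ∧
  (∀ X Y : V, Dc X (A.phi Y) = A.phi (Dc X Y)) ∧
  (∀ X : V, Dc X A.xi = 0) ∧
  (∀ X Y : V, A.D X (A.eta Y) = A.eta (Dc X Y)) ∧
  (∀ X Y Z : V, A.D X (A.g Y Z) = A.g (Dc X Y) Z + A.g Y (Dc X Z))

end ACMS

namespace ACMS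

variable {F V : Type*} [CommRing F] [PartialOrder F] [Algebra ℝ F]
  [LieRing V] [Module F V] [Module ℝ V] [IsScalarTower ℝ F V]
variable (A : ACMS F V)

/-! ### Basic derived lemmas -/

lemma D_zero (X : V) : A.D X (0 : F) = 0 := by
  have := A.D_add X 0 0
  simpa using this.symm

lemma D_neg (X : V) (f : F) : A.D X (-f) = -A.D X f := by
  have := A.D_add X f (-f)
  simp only [add_neg_cancel, A.D_zero] at this
  linear_combination -this

lemma D_sub (X : V) (f g : F) : A.D X (f - g) = A.D X f - A.D X g := by
  rw [sub_eq_add_neg, A.D_add, A.D_neg, sub_eq_add_neg]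

lemma D_zeroX (f : F) : A.D (0 : V) f = 0 := by
  have := A.D_smulX (0 : F) (0 : V) f
  simpa using this

lemma D_negX (X : V) (f : F) : A.D (-X) f = -A.D X f := by
  have := A.D_smulX (-1 : F) X f
  simpa using this

lemma g_addY (X Y Z : V) : A.g X (Y + Z) = A.g X Y + A.g X Z := by
  rw [A.g_symm, A.g_addX, A.g_symm Y, A.g_symm Z]

lemma g_smulY (f : F) (X Y : V) : A.g X (f • Y) = f * A.g X Y := by
  rw [A.g_symm, A.g_smulX, A.g_symm]

lemma g_zeroX (Y : V) : A.g 0 Y = 0 := by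
  have := A.g_smulX (0 : F) 0 Y; simpa using this

lemma g_zeroY (X : V) : A.g X 0 = 0 := by rw [A.g_symm, A.g_zeroX]

lemma g_negX (X Y : V) : A.g (-X) Y = -A.g X Y := by
  have := A.g_smulX (-1 : F) X Y; simpa using this

lemma g_negY (X Y : V) : A.g X (-Y) = -A.g X Y := by
  rw [A.g_symm, A.g_negX, A.g_symm]

lemma g_subX (X Y Z : V) : A.g (X - Y) Z = A.g X Z - A.g Y Z := by
  rw [sub_eq_add_neg, A.g_addX, A.g_negX, sub_eq_add_neg]

lemma g_subY (X Y Z : V) : A.g X (Y - Z) = A.g X Y - A.g X Z := by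
  rw [A.g_symm, A.g_subX, A.g_symm Y, A.g_symm Z]

lemma eta_zero : A.eta (0 : V) = 0 := by
  have := A.eta_smul (0 : F) 0; simpa using this

lemma eta_neg (X : V) : A.eta (-X) = -A.eta X := by
  have := A.eta_smul (-1 : F) X; simpa using this

lemma eta_sub (X Y : V) : A.eta (X - Y) = A.eta X - A.eta Y := by
  rw [sub_eq_add_neg, A.eta_add, A.eta_neg, sub_eq_add_neg]

lemma phi_zero : A.phi (0 : V) = 0 := by
  have := A.phi_smul (0 : F) 0; simpa using this

lemma phi_neg (X : V) : A.phi (-X) = -A.phi X := by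
  have := A.phi_smul (-1 : F) X; simpa using this

lemma phi_sub (X Y : V) : A.phi (X - Y) = A.phi X - A.phi Y := by
  rw [sub_eq_add_neg, A.phi_add, A.phi_neg, sub_eq_add_neg]

lemma phi_smulR (r : ℝ) (X : V) : A.phi (r • X) = r • A.phi X := by
  rw [algebra_compatible_smul F r X, A.phi_smul, algebra_compatible_smul F r (A.phi X)]

/-- `g(X, ξ) = η(X)`. -/
lemma g_xi (X : V) : A.g X A.xi = A.eta X := by
  have h := A.g_phi_phi X A.xi
  rw [A.phi_xi, A.g_zeroY, A.eta_xi] at h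
  linear_combination -h

lemma g_xiX (X : V) : A.g A.xi X = A.eta X := by rw [A.g_symm, A.g_xi]

/-- `Φ` antisymmetry: `g(φX, Y) = -g(X, φY)`. -/
lemma g_phiX (X Y : V) : A.g (A.phi X) Y = -A.g X (A.phi Y) := by
  have h := A.g_phi_phi X (A.phi Y)
  rw [A.eta_phi, mul_zero, sub_zero, A.phi_phi, A.g_addY, A.g_negY, A.g_smulY,
    A.g_xi, A.eta_phi, mul_zero, add_zero] at h
  linear_combination -h

end ACMS

namespace ACMS

variable {F V : Type*} [CommRing F] [PartialOrder F] [Algebra ℝ F]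
  [LieRing V] [Module F V] [Module ℝ V] [IsScalarTower ℝ F V]
variable (A : ACMS F V)

set_option linter.unusedSectionVars false

lemma half_smul_cancel {a b : F} (h : ((1:ℝ)/2) • a = ((1:ℝ)/2) • b) : a = b := by
  have h2 := congrArg (fun t => (2:ℝ) • t) h
  simpa [smul_smul] using h2

lemma two_smul_eq (a : F) : (2:ℝ) • a = a + a := by
  rw [two_smul]

/-- Koszul formula. -/
lemma koszul (X Y Z : V) : A.g (A.nabla X Y) Z =
    ((1:ℝ)/2) • (A.D X (A.g Y Z) + A.D Y (A.g X Z) - A.D Z (A.g X Y)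
      + A.g ⁅X, Y⁆ Z - A.g ⁅X, Z⁆ Y - A.g ⁅Y, Z⁆ X) := by
  have key : A.g (A.nabla X Y) Z + A.g (A.nabla X Y) Z =
      A.D X (A.g Y Z) + A.D Y (A.g X Z) - A.D Z (A.g X Y)
      + A.g ⁅X, Y⁆ Z - A.g ⁅X, Z⁆ Y - A.g ⁅Y, Z⁆ X := ?_
  · rw [← key, ← two_smul ℝ, smul_smul]
    norm_num
  have e1 := A.nabla_metric X Y Z
  have e2 := A.nabla_metric Y X Z
  have e3 := A.nabla_metric Z X Y
  have t1 : A.nabla Y X = A.nabla X Y - ⁅X, Y⁆ := by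
    rw [← A.nabla_torsion_free X Y]; abel
  have t2 : A.nabla Z X = A.nabla X Z - ⁅X, Z⁆ := by
    rw [← A.nabla_torsion_free X Z]; abel
  have t3 : A.nabla Z Y = A.nabla Y Z - ⁅Y, Z⁆ := by
    rw [← A.nabla_torsion_free Y Z]; abel
  rw [t1] at e2
  rw [t2, t3] at e3
  rw [A.g_subX] at e2
  rw [A.g_subX, A.g_subY] at e3
  linear_combination -e1 - e2 + e3 - A.g_symm Y (A.nabla X Z) - A.g_symm X ⁅Y, Z⁆
end ACMS

namespace ACMS

variable {F V : Type*} [CommRing F] [PartialOrder F] [Algebra ℝ F]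
  [LieRing V] [Module F V] [Module ℝ V] [IsScalarTower ℝ F V]
variable (A : ACMS F V)

set_option linter.unusedSectionVars false

lemma g_phi_swap (X Y : V) : A.g X (A.phi Y) = -A.g Y (A.phi X) := by
  rw [A.g_symm X (A.phi Y), A.g_phiX]

lemma g_lie_swap (X Y W : V) : A.g ⁅X, Y⁆ W = -A.g ⁅Y, X⁆ W := by
  rw [(lie_skew Y X).symm, A.g_negX, neg_neg]

lemma eta_lie_swap (X Y : V) : A.eta ⁅X, Y⁆ = -A.eta ⁅Y, X⁆ := by
  rw [(lie_skew Y X).symm, A.eta_neg, neg_neg]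

lemma D_g_phi_swap (W X Y : V) :
    A.D W (A.g X (A.phi Y)) = -A.D W (A.g Y (A.phi X)) := by
  rw [A.g_phi_swap, A.D_neg]

lemma collect_half (a b c d e x y : F) :
    ((3:ℝ)/2) • (((1:ℝ)/3) • a) - ((3:ℝ)/2) • (((1:ℝ)/3) • b) + ((1:ℝ)/2) • c
      + (((1:ℝ)/2) • d) * x - (((1:ℝ)/2) • e) * y
    = ((1:ℝ)/2) • (a - b + c + d * x - e * y) := by
  rw [smul_mul_assoc, smul_mul_assoc, smul_smul, smul_smul]
  module

/-- Blair's fundamental identity for almost contact metric manifolds. -/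
lemma master (X Y Z : V) :
    A.g (A.covPhi X Y) Z =
      ((3:ℝ)/2) • A.dPhi X (A.phi Y) (A.phi Z) - ((3:ℝ)/2) • A.dPhi X Y Z
      + ((1:ℝ)/2) • (A.g (A.N1 Y Z) (A.phi X) + A.N2 Y Z * A.eta X)
      + A.dEta (A.phi Y) X * A.eta Z - A.dEta (A.phi Z) X * A.eta Y := by
  rw [covPhi, A.g_subX, A.g_phiX, sub_neg_eq_add, A.koszul, A.koszul, ← smul_add,
      dPhi, dPhi, dEta, dEta, collect_half]
  congr 1
  simp only [Phi, N1, nijPhi, N2, A.phi_phi, A.g_phiX, A.g_addX, A.g_smulX, A.g_addY,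
    A.g_smulY, A.g_negX, A.g_negY, A.g_subX, A.g_subY, A.g_xi, A.g_xiX, A.eta_phi,
    A.eta_xi, A.eta_add, A.eta_smul, A.eta_neg, A.eta_zero, A.phi_xi, A.phi_zero,
    A.phi_neg, A.phi_add, A.phi_sub, A.phi_smul, A.D_add, A.D_sub, A.D_neg, A.D_mul, A.D_zero,
    A.g_zeroX, A.g_zeroY, mul_zero, zero_mul, add_zero, zero_add, sub_zero, zero_sub,
    neg_neg, mul_one, one_mul, zero_smul, smul_zero, neg_zero]
  linear_combination (congrArg (A.D (A.phi Y)) (A.g_symm X Z))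
    + A.D_g_phi_swap Y X Z
    - A.g_lie_swap (A.phi Z) X Y
    - A.g_lie_swap Z X (A.phi Y)
    - A.eta_lie_swap (A.phi Z) Y * A.eta X
    + A.eta_lie_swap (A.phi Y) X * A.eta Z

end ACMS

namespace ACMS

variable {F V : Type*} [CommRing F] [PartialOrder F] [Algebra ℝ F]
  [LieRing V] [Module F V] [Module ℝ V] [IsScalarTower ℝ F V]
variable (A : ACMS F V)

set_option linter.unusedSectionVars false

lemma D_one (X : V) : A.D X (1 : F) = 0 := by
  have := A.D_mul X 1 1
  simpa using this

lemma smul_comm_RF (r : ℝ) (f : F) (v : V) : r • (f • v) = f • (r • v) := by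
  rw [algebra_compatible_smul F r (f • v), ← mul_smul, mul_comm, mul_smul,
    ← algebra_compatible_smul]

lemma eta_smulR (r : ℝ) (X : V) : A.eta (r • X) = r • A.eta X := by
  rw [algebra_compatible_smul F r X, A.eta_smul, Algebra.smul_def]

lemma g_smulRX (r : ℝ) (X Y : V) : A.g (r • X) Y = r • A.g X Y := by
  rw [algebra_compatible_smul F r X, A.g_smulX, Algebra.smul_def]

lemma phi_smulR' (r : ℝ) (X : V) : A.phi (r • X) = r • A.phi X := A.phi_smulR r X

lemma two_smulF (x : F) : (2:ℝ) • x = 2 * x := by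
  rw [two_smul, two_mul]

lemma half_two (x : F) : ((1:ℝ)/2) • (2 * x) = x := by
  rw [← two_smulF, smul_smul]
  norm_num

lemma bracket_smulX (f : F) (X Y : V) : ⁅f • X, Y⁆ = f • ⁅X, Y⁆ - A.D Y f • X := by
  have h2 : -⁅Y, f • X⁆ = ⁅f • X, Y⁆ := lie_skew _ _
  rw [← h2, A.bracket_smul, show ⁅X, Y⁆ = -⁅Y, X⁆ from (lie_skew X Y).symm]
  module

lemma lie_swap (X Y : V) : ⁅Y, X⁆ = -⁅X, Y⁆ := by
  rw [← lie_skew X Y, neg_neg]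

/-! ### dEta -/

lemma dEta_skew (X Y : V) : A.dEta X Y = -A.dEta Y X := by
  rw [dEta, dEta, lie_swap Y X, A.eta_neg]
  module

lemma dEta_addX (X X' Y : V) : A.dEta (X + X') Y = A.dEta X Y + A.dEta X' Y := by
  rw [dEta, dEta, dEta, A.D_addX, A.eta_add, A.D_add, add_lie, A.eta_add]
  module

lemma dEta_smulX (f : F) (X Y : V) : A.dEta (f • X) Y = f * A.dEta X Y := by
  rw [dEta, dEta, A.D_smulX, A.eta_smul, A.D_mul, A.bracket_smulX, A.eta_sub,
    A.eta_smul, A.eta_smul, mul_smul_comm]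
  congr 1
  ring

lemma dEta_negX (X Y : V) : A.dEta (-X) Y = -A.dEta X Y := by
  have := A.dEta_smulX (-1 : F) X Y
  simpa using this

lemma dEta_horiz {X Y : V} (hX : A.eta X = 0) (hY : A.eta Y = 0) :
    2 * A.dEta X Y = -A.eta ⁅X, Y⁆ := by
  rw [dEta, hX, hY, A.D_zero, A.D_zero, ← two_smulF, smul_smul]
  norm_num

/-! ### nijPhi and N1 -/

lemma nij_skew (X Y : V) : A.nijPhi X Y = -A.nijPhi Y X := by
  rw [nijPhi, nijPhi, lie_swap Y X, lie_swap (A.phi Y) (A.phi X),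
    lie_swap (A.phi Y) X, lie_swap Y (A.phi X), A.phi_neg, A.phi_neg, A.phi_neg,
    A.phi_neg]
  module

lemma nij_addX (X X' Y : V) :
    A.nijPhi (X + X') Y = A.nijPhi X Y + A.nijPhi X' Y := by
  simp only [nijPhi, A.phi_add, add_lie, lie_add]
  abel

lemma nij_smulX (f : F) (X Y : V) : A.nijPhi (f • X) Y = f • A.nijPhi X Y := by
  simp only [nijPhi, A.phi_smul, A.bracket_smulX, A.phi_sub, A.phi_add, A.phi_phi,
    A.eta_sub, A.eta_smul, smul_sub, smul_add, A.eta_phi, mul_zero, zero_smul,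
    sub_zero]
  module

lemma N1_skew (X Y : V) : A.N1 X Y = -A.N1 Y X := by
  rw [N1, N1, A.nij_skew, A.dEta_skew]
  module

lemma N1_addX (X X' Y : V) : A.N1 (X + X') Y = A.N1 X Y + A.N1 X' Y := by
  rw [N1, N1, N1, A.nij_addX, A.dEta_addX]
  module

lemma N1_smulX (f : F) (X Y : V) : A.N1 (f • X) Y = f • A.N1 X Y := by
  rw [N1, N1, A.nij_smulX, A.dEta_smulX, smul_add]
  rw [show (2 * (f * A.dEta X Y)) = f * (2 * A.dEta X Y) by ring, mul_smul]

lemma N1_addY (X Y Y' : V) : A.N1 X (Y + Y') = A.N1 X Y + A.N1 X Y' := by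
  rw [A.N1_skew, A.N1_addX, A.N1_skew Y X, A.N1_skew Y' X]
  module

lemma N1_smulY (f : F) (X Y : V) : A.N1 X (f • Y) = f • A.N1 X Y := by
  rw [A.N1_skew, A.N1_smulX, A.N1_skew Y X]
  module

lemma N1_self (X : V) : A.N1 X X = 0 := by
  have h := A.N1_skew X X
  have h2 : (2:ℝ) • A.N1 X X = 0 := by rw [two_smul]; nth_rewrite 2 [h]; abel
  have := congrArg (fun t => ((1:ℝ)/2) • t) h2
  simpa [smul_smul] using this

/-! ### N2 -/

lemma N2_skew (X Y : V) : A.N2 X Y = -A.N2 Y X := by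
  rw [N2, N2]; ring

lemma N2_addX (X X' Y : V) : A.N2 (X + X') Y = A.N2 X Y + A.N2 X' Y := by
  rw [N2, N2, N2, A.phi_add, A.D_addX, A.eta_add, A.D_add, add_lie, A.eta_add,
    lie_add, A.eta_add]
  ring

lemma N2_smulX (f : F) (X Y : V) : A.N2 (f • X) Y = f * A.N2 X Y := by
  rw [N2, N2, A.phi_smul, A.D_smulX, A.bracket_smulX, A.eta_sub, A.eta_smul,
    A.eta_smul, A.eta_smul, A.D_mul, A.bracket_smul, A.eta_add, A.eta_smul,
    A.eta_smul, A.eta_phi]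
  ring

lemma N2_addY (X Y Y' : V) : A.N2 X (Y + Y') = A.N2 X Y + A.N2 X Y' := by
  rw [A.N2_skew, A.N2_addX, A.N2_skew Y X, A.N2_skew Y' X]; ring

lemma N2_smulY (f : F) (X Y : V) : A.N2 X (f • Y) = f * A.N2 X Y := by
  rw [A.N2_skew, A.N2_smulX, A.N2_skew Y X]; ring

lemma N2_self (X : V) : A.N2 X X = 0 := by
  rw [N2]; ring

/-! ### h -/

lemma liePhi_add (X Y : V) : A.liePhi (X + Y) = A.liePhi X + A.liePhi Y := by
  simp only [liePhi, A.phi_add, lie_add]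
  abel

lemma liePhi_smul (f : F) (X : V) : A.liePhi (f • X) = f • A.liePhi X := by
  rw [liePhi, liePhi, A.phi_smul, A.bracket_smul, A.bracket_smul, A.phi_add,
    A.phi_smul, A.phi_smul]
  module

lemma liePhi_xi : A.liePhi A.xi = 0 := by
  rw [liePhi, A.phi_xi, lie_zero, lie_self, A.phi_zero, sub_zero]

lemma h_add (X Y : V) : A.h (X + Y) = A.h X + A.h Y := by
  rw [h, h, h, A.liePhi_add, smul_add]

lemma h_smul (f : F) (X : V) : A.h (f • X) = f • A.h X := by
  rw [h, h, A.liePhi_smul, smul_comm_RF]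

lemma h_xi : A.h A.xi = 0 := by rw [h, A.liePhi_xi, smul_zero]

lemma h_horiz (Y : V) : A.h (Y - A.eta Y • A.xi) = A.h Y := by
  rw [show Y - A.eta Y • A.xi = Y + (-A.eta Y) • A.xi by module, A.h_add, A.h_smul,
    A.h_xi, smul_zero, add_zero]

lemma eta_horiz (Y : V) : A.eta (Y - A.eta Y • A.xi) = 0 := by
  rw [A.eta_sub, A.eta_smul, A.eta_xi, mul_one, sub_self]

end ACMS

namespace ACMS

variable {F V : Type*} [CommRing F] [PartialOrder F] [Algebra ℝ F]
  [LieRing V] [Module F V] [Module ℝ V] [IsScalarTower ℝ F V]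
variable (A : ACMS F V)

set_option linter.unusedSectionVars false

lemma phi_phi_horiz {X : V} (hX : A.eta X = 0) : A.phi (A.phi X) = -X := by
  rw [A.phi_phi, hX, zero_smul, add_zero]

lemma eta_N1 (Y Z : V) :
    A.eta (A.N1 Y Z) = A.eta ⁅A.phi Y, A.phi Z⁆ + 2 * A.dEta Y Z := by
  rw [N1, A.eta_add, A.eta_smul, A.eta_xi, mul_one, nijPhi, A.eta_sub, A.eta_sub,
    A.eta_add, A.eta_phi, A.eta_phi, A.eta_phi]
  ring

lemma nij_xi (W : V) : A.nijPhi A.xi W = -A.phi (A.liePhi W) := by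
  rw [nijPhi, A.phi_xi, zero_lie, zero_lie, A.phi_zero, liePhi, A.phi_sub]
  abel

lemma liePhi_eq_two_h (W : V) : A.liePhi W = (2:ℝ) • A.h W := by
  rw [h, smul_smul]
  norm_num

lemma eta_h (W : V) : 2 * A.eta (A.h W) = A.eta ⁅A.xi, A.phi W⁆ := by
  have : A.eta (A.h W) = ((1:ℝ)/2) • A.eta (A.liePhi W) := by
    rw [h, A.eta_smulR]
  rw [this, liePhi, A.eta_sub, A.eta_phi, sub_zero, mul_smul_comm, half_two]

lemma gN1xi (W X : V) : A.g (A.N1 A.xi W) (A.phi X) =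
    2 * A.eta (A.h W) * A.eta X - 2 * A.g (A.h W) X := by
  rw [N1, A.g_addX, A.g_smulX, A.g_xiX, A.eta_phi, mul_zero, add_zero, A.nij_xi,
    A.g_negX, A.liePhi_eq_two_h, A.phi_smulR, A.g_smulRX, A.g_phi_phi, two_smulF]
  ring

lemma N2_xi (W : V) : A.N2 A.xi W = -(2 * A.eta (A.h W)) := by
  rw [N2, A.phi_xi, A.D_zeroX, zero_lie, A.eta_zero, A.eta_xi, A.D_one,
    lie_swap A.xi (A.phi W), A.eta_neg, A.eta_h]
  ring

lemma N2_horiz_formula {Y Z : V} (hY : A.eta Y = 0) (hZ : A.eta Z = 0) :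
    A.N2 Y Z = 2 * A.dEta (A.phi Y) Z - 2 * A.dEta (A.phi Z) Y := by
  rw [N2, hY, hZ, A.D_zero, A.D_zero]
  have b1 := A.dEta_horiz (A.eta_phi Y) hZ
  have b2 := A.dEta_horiz (A.eta_phi Z) hY
  linear_combination -b1 + b2

lemma dEta_phiphi (hN : A.EtaNormal) {Y Z : V} (hY : A.eta Y = 0)
    (hZ : A.eta Z = 0) : 2 * A.dEta Y Z = 2 * A.dEta (A.phi Y) (A.phi Z) := by
  have h0 : A.eta (A.N1 Y Z) = 0 := by rw [hN Y Z hY hZ, A.eta_zero]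
  rw [A.eta_N1] at h0
  have h1 := A.dEta_horiz (A.eta_phi Y) (A.eta_phi Z)
  linear_combination h0 - h1

lemma N2_horiz_zero (hN : A.EtaNormal) {Y Z : V} (hY : A.eta Y = 0)
    (hZ : A.eta Z = 0) : A.N2 Y Z = 0 := by
  have hf := A.N2_horiz_formula hY hZ
  have c1 := A.dEta_phiphi hN (A.eta_phi Y) hZ
  rw [A.phi_phi_horiz hY, A.dEta_negX] at c1
  have c2 := A.dEta_skew Y (A.phi Z)
  linear_combination hf + c1 - 2 * c2

lemma key2 (hN : A.EtaNormal) (X Y Z : V) :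
    A.g (A.N1 Y Z) (A.phi X) + A.N2 Y Z * A.eta X
      = 2 * (A.g (A.h Y) X * A.eta Z - A.g (A.h Z) X * A.eta Y) := by
  have hY0 : A.eta (Y - A.eta Y • A.xi) = 0 := A.eta_horiz Y
  have hZ0 : A.eta (Z - A.eta Z • A.xi) = 0 := A.eta_horiz Z
  have hdY : Y = (Y - A.eta Y • A.xi) + A.eta Y • A.xi := by module
  have hdZ : Z = (Z - A.eta Z • A.xi) + A.eta Z • A.xi := by module
  have e1 : A.N1 Y Z
      = A.N1 (Y - A.eta Y • A.xi) (Z - A.eta Z • A.xi)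
        + A.eta Y • A.N1 A.xi (Z - A.eta Z • A.xi)
        - A.eta Z • A.N1 A.xi (Y - A.eta Y • A.xi) := by
    conv_lhs => rw [hdY, hdZ]
    simp only [A.N1_addX, A.N1_addY, A.N1_smulX, A.N1_smulY, A.N1_self, smul_zero,
      add_zero]
    rw [A.N1_skew (Y - A.eta Y • A.xi) A.xi]
    module
  have e2 : A.N2 Y Z = A.eta Y * A.N2 A.xi (Z - A.eta Z • A.xi)
      - A.eta Z * A.N2 A.xi (Y - A.eta Y • A.xi) := by
    conv_lhs => rw [hdY, hdZ]
    simp only [A.N2_addX, A.N2_addY, A.N2_smulX, A.N2_smulY, A.N2_self, mul_zero,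
      add_zero]
    rw [A.N2_horiz_zero hN hY0 hZ0, A.N2_skew (Y - A.eta Y • A.xi) A.xi]
    ring
  rw [e1, A.g_subX, A.g_addX, hN _ _ hY0 hZ0, A.g_zeroX, zero_add, A.g_smulX,
    A.g_smulX, A.gN1xi, A.gN1xi, A.h_horiz, A.h_horiz, e2, A.N2_xi, A.N2_xi,
    A.h_horiz, A.h_horiz]
  ring

lemma key2_rev
    (hK : ∀ X Y Z : V, A.g (A.N1 Y Z) (A.phi X) + A.N2 Y Z * A.eta X
      = 2 * (A.g (A.h Y) X * A.eta Z - A.g (A.h Z) X * A.eta Y)) :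
    A.EtaNormal := by
  have hN2 : ∀ Y Z : V, A.eta Y = 0 → A.eta Z = 0 → A.N2 Y Z = 0 := by
    intro Y Z hY hZ
    have h := hK A.xi Y Z
    rw [A.phi_xi, A.g_zeroY, A.eta_xi, hY, hZ, mul_zero, mul_zero, mul_one] at h
    linear_combination h
  intro Y Z hY hZ
  have hgz : ∀ X : V, A.g (A.N1 Y Z) (A.phi X) = 0 := by
    intro X
    have h := hK X Y Z
    rw [hN2 Y Z hY hZ, zero_mul, add_zero, hY, hZ, mul_zero, mul_zero] at h
    linear_combination h
  have hetaN1 : A.eta (A.N1 Y Z) = 0 := by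
    have hN2' := hN2 (A.phi Y) Z (A.eta_phi Y) hZ
    rw [A.N2_horiz_formula (A.eta_phi Y) hZ, A.phi_phi_horiz hY, A.dEta_negX] at hN2'
    have h1 := A.dEta_horiz (A.eta_phi Y) (A.eta_phi Z)
    rw [A.eta_N1]
    linear_combination h1 - hN2' - 2 * A.dEta_skew (A.phi Z) (A.phi Y)
  apply A.g_nondeg
  intro W
  have hdW : W = A.phi (-A.phi W) + A.eta W • A.xi := by
    rw [A.phi_neg, A.phi_phi]
    module
  calc A.g (A.N1 Y Z) W
      = A.g (A.N1 Y Z) (A.phi (-A.phi W) + A.eta W • A.xi) := by rw [← hdW]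
    _ = A.g (A.N1 Y Z) (A.phi (-A.phi W)) + A.eta W * A.g (A.N1 Y Z) A.xi := by
        rw [A.g_addY, A.g_smulY]
    _ = 0 := by rw [hgz, A.g_xi, hetaN1, mul_zero, add_zero]

end ACMS

namespace ACMS

variable {F V : Type*} [CommRing F] [PartialOrder F] [Algebra ℝ F]
  [LieRing V] [Module F V] [Module ℝ V] [IsScalarTower ℝ F V]
variable (A : ACMS F V)

set_option linter.unusedSectionVars false

lemma N1_horiz_formula {X Y : V} (hX : A.eta X = 0) (hY : A.eta Y = 0) :
    A.N1 X Y = -((⁅X, Y⁆ - ⁅A.phi X, A.phi Y⁆)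
      + A.phi (⁅A.phi X, Y⁆ + ⁅X, A.phi Y⁆)) := by
  rw [N1, nijPhi, A.phi_phi, A.dEta_horiz hX hY, A.phi_add]
  module

lemma etaNormal_iff_CR : A.EtaNormal ↔ A.IsCR := by
  constructor
  · intro hN X Y hX hY
    have h1 := hN X Y hX hY
    rw [A.N1_horiz_formula hX hY] at h1
    have hZW : ⁅X, Y⁆ - ⁅A.phi X, A.phi Y⁆
        = -A.phi (⁅A.phi X, Y⁆ + ⁅X, A.phi Y⁆) := by
      have h2 : (⁅X, Y⁆ - ⁅A.phi X, A.phi Y⁆)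
          + A.phi (⁅A.phi X, Y⁆ + ⁅X, A.phi Y⁆) = 0 := by
        rw [← neg_eq_zero, h1]
      exact eq_neg_of_add_eq_zero_left h2
    have hW : A.eta (⁅A.phi X, Y⁆ + ⁅X, A.phi Y⁆) = 0 := by
      have h2 := hN (A.phi X) Y (A.eta_phi X) hY
      have h3 : A.eta (A.N1 (A.phi X) Y) = 0 := by rw [h2, A.eta_zero]
      rw [A.eta_N1, A.phi_phi_horiz hX, neg_lie, A.eta_neg] at h3
      have h4 := A.dEta_horiz (A.eta_phi X) hY
      rw [A.eta_add]
      linear_combination -h3 + h4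
    refine ⟨⁅X, Y⁆ - ⁅A.phi X, A.phi Y⁆, ?_, rfl, ?_⟩
    · rw [hZW, A.eta_neg, A.eta_phi, neg_zero]
    · rw [hZW, A.phi_neg, A.phi_phi, hW, zero_smul, add_zero, neg_neg]
  · intro hCR X Y hX hY
    obtain ⟨Z, hZ, h1, h2⟩ := hCR X Y hX hY
    rw [A.N1_horiz_formula hX hY, h1, h2, A.phi_phi, hZ, zero_smul, add_zero]
    abel

end ACMS


/-- For an almost contact metric manifold `M` the following are
equivalent: (1) `M` is `η`-normal; (2) `M` is a CR-manifold; (3) with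
`u(Y,X) = dη(φY, X) + g(hY, X)`, the Levi-Civita covariant derivative of `φ`
satisfies `g((∇_X φ)Y, Z) = (3/2) dΦ(X, φY, φZ) - (3/2) dΦ(X,Y,Z)
+ u(Y,X) η(Z) - u(Z,X) η(Y)` for all vector fields `X, Y, Z`. -/
theorem eta_normal_iff_CR_iff_covariant_formula
    {F V : Type*} [CommRing F] [PartialOrder F] [Algebra ℝ F]
    [LieRing V] [Module F V] [Module ℝ V] [IsScalarTower ℝ F V]
    (A : ACMS F V) :
    (A.EtaNormal ↔ A.IsCR) ∧
    (A.EtaNormal ↔ ∀ X Y Z : V,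
      A.g (A.covPhi X Y) Z =
        ((3:ℝ)/2) • A.dPhi X (A.phi Y) (A.phi Z) - ((3:ℝ)/2) • A.dPhi X Y Z
        + (A.dEta (A.phi Y) X + A.g (A.h Y) X) * A.eta Z
        - (A.dEta (A.phi Z) X + A.g (A.h Z) X) * A.eta Y) := by
  refine ⟨A.etaNormal_iff_CR, ?_⟩
  constructor
  · intro hN X Y Z
    rw [A.master, A.key2 hN X Y Z, ACMS.half_two]
    ring
  · intro hF
    apply A.key2_rev
    intro X Y Z
    have h1 := hF X Y Z
    rw [A.master] at h1
    have h2 : ((1:ℝ)/2) • (A.g (A.N1 Y Z) (A.phi X) + A.N2 Y Z * A.eta X)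
        = A.g (A.h Y) X * A.eta Z - A.g (A.h Z) X * A.eta Y := by
      linear_combination h1
    have h3 := congrArg (fun t => (2:ℝ) • t) h2
    simp only [smul_smul] at h3
    norm_num at h3
    rw [ACMS.two_smulF, two_mul] at h3
    linear_combination h3
end
end

section
/- On every almost contact metric manifold the identities hφ + φh = (1/2)·(L_ξη)⊗ξ and 2η(hX) = η((∇_ξφ)X) = −g(∇_ξξ, φX) = −(L_ξη)(φX) hold; consequently the following conditions are equivalent: (i) hφ + φh = 0, (ii) L_ξη = 0, (iii) η∘h = 0, (iv) ∇_ξξ = 0 (the Reeb vector field is autoparallel with respect to the Levi-Civita connection). -/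
noncomputable section

section Aux

variable {F V : Type*} [CommRing F] [PartialOrder F] [Algebra ℝ F]
  [LieRing V] [Module F V] [Module ℝ V] [IsScalarTower ℝ F V]
variable (A : ACMS F V)

lemma aD_one (X : V) : A.D X 1 = 0 := by
  have h := A.D_mul X 1 1
  simp only [mul_one, one_mul] at h
  exact (left_eq_add.mp h)

lemma aD_zero (X : V) : A.D X 0 = 0 := by
  have h := A.D_add X 0 0
  simp only [add_zero] at h
  exact (left_eq_add.mp h)

lemma aphi_rsmul (r : ℝ) (X : V) : A.phi (r • X) = r • A.phi X := by
  rw [← algebraMap_smul F r X, A.phi_smul, algebraMap_smul]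

lemma aeta_rsmul (r : ℝ) (X : V) : A.eta (r • X) = r • A.eta X := by
  rw [← algebraMap_smul F r X, A.eta_smul, Algebra.smul_def]

lemma ag_rsmulX (r : ℝ) (X Y : V) : A.g (r • X) Y = r • A.g X Y := by
  rw [← algebraMap_smul F r X, A.g_smulX, Algebra.smul_def]

lemma aphi_zero : A.phi 0 = 0 := by
  have h := A.phi_smul 0 0
  simpa using h

lemma aphi_neg (X : V) : A.phi (-X) = - A.phi X := by
  rw [← neg_one_smul F X, A.phi_smul, neg_one_smul]

lemma aphi_sub (X Y : V) : A.phi (X - Y) = A.phi X - A.phi Y := by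
  rw [sub_eq_add_neg, A.phi_add, aphi_neg, sub_eq_add_neg]

lemma aeta_neg (X : V) : A.eta (-X) = - A.eta X := by
  rw [← neg_one_smul F X, A.eta_smul]; ring

lemma aeta_sub (X Y : V) : A.eta (X - Y) = A.eta X - A.eta Y := by
  rw [sub_eq_add_neg, A.eta_add, aeta_neg, sub_eq_add_neg]

lemma ag_zeroX (Y : V) : A.g 0 Y = 0 := by
  have h := A.g_smulX 0 0 Y
  simpa using h

lemma ag_zeroY (X : V) : A.g X 0 = 0 := by
  rw [A.g_symm]; exact ag_zeroX A X

lemma ag_negX (X Y : V) : A.g (-X) Y = - A.g X Y := by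
  rw [← neg_one_smul F X, A.g_smulX]; ring

lemma ag_subX (X Y Z : V) : A.g (X - Y) Z = A.g X Z - A.g Y Z := by
  rw [sub_eq_add_neg, A.g_addX, ag_negX, sub_eq_add_neg]

lemma ag_addY (X Y Z : V) : A.g X (Y + Z) = A.g X Y + A.g X Z := by
  rw [A.g_symm, A.g_addX, A.g_symm Y, A.g_symm Z]

lemma ahalf_two (a : F) : (1/2 : ℝ) • (a + a) = a := by
  rw [← two_smul ℝ a, smul_smul]; norm_num

lemma atwo_mul_half (a : F) : (2 : F) * ((1/2 : ℝ) • a) = a := by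
  rw [mul_smul_comm, two_mul, ahalf_two]

/-- `η X = g X ξ`. -/
lemma aeta_eq_g (X : V) : A.eta X = A.g X A.xi := by
  have h := A.g_phi_phi X A.xi
  rw [A.phi_xi, ag_zeroY, A.eta_xi, mul_one] at h
  linear_combination h

lemma ag_xi_xi : A.g A.xi A.xi = 1 := by
  have := aeta_eq_g A A.xi
  rw [A.eta_xi] at this; exact this.symm

/-- `η(∇_Y ξ) = 0`. -/
lemma aeta_nabla_xi (Y : V) : A.eta (A.nabla Y A.xi) = 0 := by
  have h := A.nabla_metric Y A.xi A.xi
  rw [ag_xi_xi, aD_one] at h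
  rw [A.g_symm A.xi (A.nabla Y A.xi)] at h
  have h2 : A.g (A.nabla Y A.xi) A.xi = 0 := by
    have := ahalf_two (A.g (A.nabla Y A.xi) A.xi)
    rw [← h] at this
    simpa using this.symm
  rw [aeta_eq_g]; exact h2

/-- `(L_ξ η)(Y) = g(Y, ∇_ξ ξ)`. -/
lemma alieEta_eq (Y : V) : A.lieEta Y = A.g Y (A.nabla A.xi A.xi) := by
  unfold ACMS.lieEta
  have hb : (⁅A.xi, Y⁆ : V) = A.nabla A.xi Y - A.nabla Y A.xi :=
    (A.nabla_torsion_free A.xi Y).symm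
  rw [aeta_eq_g A Y, A.nabla_metric A.xi Y A.xi, hb, aeta_eq_g, ag_subX]
  have h0 : A.g (A.nabla Y A.xi) A.xi = 0 := by
    rw [← aeta_eq_g]; exact aeta_nabla_xi A Y
  rw [h0]
  ring

/-- Main identity on `L_ξ φ`. -/
lemma aliePhi_identity (X : V) :
    A.liePhi (A.phi X) + A.phi (A.liePhi X) = A.lieEta X • A.xi := by
  unfold ACMS.liePhi
  rw [aphi_sub, A.phi_phi ⁅A.xi, X⁆, A.phi_phi X]
  rw [lie_add, lie_neg, A.bracket_smul, lie_self, smul_zero, zero_add]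
  unfold ACMS.lieEta
  rw [sub_smul]
  abel

lemma ah_phi (X : V) :
    A.h (A.phi X) + A.phi (A.h X) = ((1:ℝ)/2) • (A.lieEta X • A.xi) := by
  unfold ACMS.h
  rw [aphi_rsmul, ← smul_add, aliePhi_identity]

/-- `2 η(h X) = η(⁅ξ, φX⁆)`. -/
lemma atwo_eta_h (X : V) : (2:F) * A.eta (A.h X) = A.eta ⁅A.xi, A.phi X⁆ := by
  unfold ACMS.h ACMS.liePhi
  rw [aeta_rsmul, aeta_sub, A.eta_phi, sub_zero, atwo_mul_half]

lemma aeta_covPhi (X : V) :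
    A.eta (A.covPhi A.xi X) = A.eta ⁅A.xi, A.phi X⁆ := by
  unfold ACMS.covPhi
  have hb : (⁅A.xi, A.phi X⁆ : V) = A.nabla A.xi (A.phi X) - A.nabla (A.phi X) A.xi :=
    (A.nabla_torsion_free A.xi (A.phi X)).symm
  rw [aeta_sub, A.eta_phi, sub_zero, hb, aeta_sub, aeta_nabla_xi, sub_zero]

lemma aeta_nabla_phi (X : V) :
    A.eta (A.nabla A.xi (A.phi X)) = - A.g (A.nabla A.xi A.xi) (A.phi X) := by
  have h := A.nabla_metric A.xi (A.phi X) A.xi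
  have hpx : A.g (A.phi X) A.xi = 0 := by
    rw [← aeta_eq_g]; exact A.eta_phi X
  rw [hpx, aD_zero] at h
  rw [aeta_eq_g]
  rw [A.g_symm (A.phi X) (A.nabla A.xi A.xi)] at h
  linear_combination -h

end Aux

/-- On every almost contact metric manifold the identities
`hφ + φh = (1/2)(L_ξη) ⊗ ξ` and
`2η(hX) = η((∇_ξφ)X) = -g(∇_ξξ, φX) = -(L_ξη)(φX)` hold; consequently the
conditions (i) `hφ + φh = 0`, (ii) `L_ξη = 0`, (iii) `η ∘ h = 0`,
(iv) `∇_ξξ = 0` (the Reeb field is autoparallel) are equivalent. -/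
theorem h_phi_anticommutator_identities
    {F V : Type*} [CommRing F] [PartialOrder F] [Algebra ℝ F]
    [LieRing V] [Module F V] [Module ℝ V] [IsScalarTower ℝ F V]
    (A : ACMS F V) :
    (∀ X : V, A.h (A.phi X) + A.phi (A.h X) = ((1:ℝ)/2) • (A.lieEta X • A.xi)) ∧
    (∀ X : V,
      (2:F) * A.eta (A.h X) = A.eta (A.covPhi A.xi X) ∧
      A.eta (A.covPhi A.xi X) = - A.g (A.nabla A.xi A.xi) (A.phi X) ∧
      - A.g (A.nabla A.xi A.xi) (A.phi X) = - A.lieEta (A.phi X)) ∧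
    ((∀ X : V, A.h (A.phi X) + A.phi (A.h X) = 0) ↔ (∀ X : V, A.lieEta X = 0)) ∧
    ((∀ X : V, A.lieEta X = 0) ↔ (∀ X : V, A.eta (A.h X) = 0)) ∧
    ((∀ X : V, A.eta (A.h X) = 0) ↔ A.nabla A.xi A.xi = 0) := by
  -- the chain of identities
  have chain : ∀ X : V,
      (2:F) * A.eta (A.h X) = A.eta (A.covPhi A.xi X) ∧
      A.eta (A.covPhi A.xi X) = - A.g (A.nabla A.xi A.xi) (A.phi X) ∧
      - A.g (A.nabla A.xi A.xi) (A.phi X) = - A.lieEta (A.phi X) := by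
    intro X
    have h1 : (2:F) * A.eta (A.h X) = A.eta (A.covPhi A.xi X) := by
      rw [atwo_eta_h, aeta_covPhi]
    have h2 : A.eta (A.covPhi A.xi X) = - A.g (A.nabla A.xi A.xi) (A.phi X) := by
      rw [aeta_covPhi]
      have hb : (⁅A.xi, A.phi X⁆ : V)
          = A.nabla A.xi (A.phi X) - A.nabla (A.phi X) A.xi :=
        (A.nabla_torsion_free A.xi (A.phi X)).symm
      rw [hb, aeta_sub, aeta_nabla_xi, sub_zero, aeta_nabla_phi]
    have h3 : - A.g (A.nabla A.xi A.xi) (A.phi X) = - A.lieEta (A.phi X) := by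
      rw [alieEta_eq, A.g_symm]
    exact ⟨h1, h2, h3⟩
  have lieEta_phi : ∀ X : V, A.lieEta (A.phi X)
      = A.g (A.phi X) (A.nabla A.xi A.xi) := fun X => alieEta_eq A _
  -- (iii) → ∇_ξ ξ = 0
  have iii_to_iv : (∀ X : V, A.eta (A.h X) = 0) → A.nabla A.xi A.xi = 0 := by
    intro hiii
    apply A.g_nondeg
    intro Y
    have h0 : A.lieEta (A.phi (A.phi Y)) = 0 := by
      obtain ⟨c1, c2, c3⟩ := chain (A.phi Y)
      have : (2:F) * A.eta (A.h (A.phi Y)) = - A.lieEta (A.phi (A.phi Y)) := by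
        rw [c1, c2, c3]
      rw [hiii (A.phi Y), mul_zero] at this
      linear_combination this
    rw [alieEta_eq, A.phi_phi, A.g_addX, ag_negX, A.g_smulX] at h0
    have hxi : A.g A.xi (A.nabla A.xi A.xi) = 0 := by
      rw [A.g_symm, ← aeta_eq_g A (A.nabla A.xi A.xi)]
      exact aeta_nabla_xi A A.xi
    rw [hxi, mul_zero, add_zero] at h0
    rw [A.g_symm]
    linear_combination -h0
  constructor
  · exact fun X => ah_phi A X
  refine ⟨chain, ?_, ?_, ?_⟩
  · -- (i) ↔ (ii)
    constructor
    · intro hi X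
      have h := (ah_phi A X).symm.trans (hi X)
      have h2 : A.g (((1:ℝ)/2) • (A.lieEta X • A.xi)) A.xi = 0 := by
        rw [h, ag_zeroX]
      rw [ag_rsmulX, A.g_smulX, ag_xi_xi, mul_one] at h2
      have := congrArg (fun a => (2:ℝ) • a) h2
      simp only [smul_smul, smul_zero] at this
      norm_num at this
      exact this
    · intro hii X
      rw [ah_phi, hii X, zero_smul, smul_zero]
  · -- (ii) ↔ (iii)
    constructor
    · intro hii X
      obtain ⟨c1, c2, c3⟩ := chain X
      have : (2:F) * A.eta (A.h X) = 0 := by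
        rw [c1, c2, c3, hii (A.phi X), neg_zero]
      calc A.eta (A.h X) = ((1:ℝ)/2) • ((2:F) * A.eta (A.h X)) := by
            rw [two_mul, ahalf_two]
        _ = 0 := by rw [this, smul_zero]
    · intro hiii X
      have hnab := iii_to_iv hiii
      rw [alieEta_eq, hnab, ag_zeroY]
  · -- (iii) ↔ (iv)
    constructor
    · exact iii_to_iv
    · intro hiv X
      obtain ⟨c1, c2, c3⟩ := chain X
      have : (2:F) * A.eta (A.h X) = 0 := by
        rw [c1, c2, hiv, ag_zeroX, neg_zero]
      have h2 := congrArg (fun a => ((1:ℝ)/2) • a) this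
      simp only [smul_zero] at h2
      rw [← h2, two_mul, ahalf_two]
end
end
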